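/- Let a, c, p ∈ ℂ with c not a nonpositive integer. For n ∈ ℕ define u_n = ∑_{k=0}^{n} ((a)_k / ((c)_k · k!)) · (−1)^{n−k} · (−p)_{n−k} / (n−k)! (the Maclaurin coefficients of (1+z)^p · M(a;c;z)). Then u_0 = 1, u_1 = a/c + p, u_2 = (1/2)·((a²+a)/(c²+c) + 2ap/c + p(p−1)), and for every integer n ≥ 2, u_{n+1} = β₀(n)·u_n + β₁(n)·u_{n−1} + β₂(n)·u_{n−2}, where β₀(n) = (a − 2n(c+n−1) + p(c+2n) + n)/((n+1)(c+n)), β₁(n) = (2a − (n−p−1)(c+n−p−2) + 2n − p − 2)/((n+1)(c+n)), and β₂(n) = (a+n−p−2)/((n+1)(c+n)). -/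

import Mathlib

open Finset PowerSeries

noncomputable def poch (w : ℂ) (k : ℕ) : ℂ := (ascPochhammer ℂ k).eval w

lemma poch_succ (w : ℂ) (k : ℕ) : poch w (k+1) = poch w k * (w + k) :=
  ascPochhammer_succ_eval k w

@[simp] lemma poch_zero (w : ℂ) : poch w 0 = 1 := by simp [poch]

lemma poch_ne_zero (c : ℂ) (hc : ∀ k : ℕ, c + (k : ℂ) ≠ 0) (k : ℕ) : poch c k ≠ 0 := by
  induction k with
  | zero => simp [poch]
  | succ k ih => rw [poch_succ]; exact mul_ne_zero ih (hc k)

noncomputable def mm (a c : ℂ) (k : ℕ) : ℂ := poch a k / (poch c k * (Nat.factorial k : ℂ))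
noncomputable def bb (p : ℂ) (j : ℕ) : ℂ := (-1 : ℂ)^j * poch (-p) j / (Nat.factorial j : ℂ)

section
variable (a c p : ℂ)

lemma mm_rec (hc : ∀ k : ℕ, c + (k : ℂ) ≠ 0) (k : ℕ) :
    ((k : ℂ)+1) * (c + k) * mm a c (k+1) = (a + k) * mm a c k := by
  have h1 : poch c k ≠ 0 := poch_ne_zero c hc k
  have h2 : (Nat.factorial k : ℂ) ≠ 0 := Nat.cast_ne_zero.2 (Nat.factorial_ne_zero k)
  have h3 : ((k:ℂ)+1) ≠ 0 := by norm_cast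
  have h4 := hc k
  rw [mm, mm, poch_succ, poch_succ, Nat.factorial_succ]
  push_cast
  field_simp

lemma bb_rec (j : ℕ) : ((j : ℂ)+1) * bb p (j+1) = (p - j) * bb p j := by
  have h2 : (Nat.factorial j : ℂ) ≠ 0 := Nat.cast_ne_zero.2 (Nat.factorial_ne_zero j)
  have h3 : ((j:ℂ)+1) ≠ 0 := by norm_cast
  rw [bb, bb, poch_succ, Nat.factorial_succ]
  push_cast
  field_simp
  ring

noncomputable def MM (a c : ℂ) : ℂ⟦X⟧ := PowerSeries.mk (mm a c)
noncomputable def BB (p : ℂ) : ℂ⟦X⟧ := PowerSeries.mk (bb p)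

lemma hM (hc : ∀ k : ℕ, c + (k : ℂ) ≠ 0) :
    X * (d⁄dX ℂ (d⁄dX ℂ (MM a c))) + (C c - X) * d⁄dX ℂ (MM a c) - C a * MM a c = 0 := by
  ext n
  rcases n with _ | n
  · have h := mm_rec a c hc 0
    simp only [MM, map_add, map_sub, sub_mul, coeff_zero_X_mul, coeff_C_mul,
      coeff_derivative, coeff_mk, map_zero, Nat.cast_zero] at *
    linear_combination h
  · have h := mm_rec a c hc (n+1)
    simp only [MM, map_add, map_sub, sub_mul, coeff_succ_X_mul, coeff_C_mul,
      coeff_derivative, coeff_mk, map_zero, Nat.cast_add, Nat.cast_one] at *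
    linear_combination h

lemma hB : (1 + X) * d⁄dX ℂ (BB p) - C p * BB p = 0 := by
  ext n
  rcases n with _ | n
  · have h := bb_rec p 0
    simp only [BB, add_mul, one_mul, map_add, map_sub, coeff_zero_X_mul, coeff_C_mul,
      coeff_derivative, coeff_mk, map_zero, Nat.cast_zero] at *
    linear_combination h
  · have h := bb_rec p (n+1)
    simp only [BB, add_mul, one_mul, map_add, map_sub, coeff_succ_X_mul, coeff_C_mul,
      coeff_derivative, coeff_mk, map_zero, Nat.cast_add, Nat.cast_one] at *
    linear_combination h

lemma hB2 : (1 + X) * d⁄dX ℂ (d⁄dX ℂ (BB p)) - (C p - 1) * d⁄dX ℂ (BB p) = 0 := by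
  ext n
  rcases n with _ | n
  · have h := bb_rec p 1
    simp only [BB, add_mul, one_mul, sub_mul, map_add, map_sub, coeff_zero_X_mul, coeff_C_mul,
      coeff_derivative, coeff_mk, map_zero, Nat.cast_zero, Nat.cast_one] at *
    linear_combination h
  · have h := bb_rec p (n+2)
    simp only [BB, add_mul, one_mul, sub_mul, map_add, map_sub, coeff_succ_X_mul, coeff_C_mul,
      coeff_derivative, coeff_mk, map_zero, Nat.cast_add, Nat.cast_one, Nat.cast_ofNat] at *
    linear_combination ((n:ℂ)+2) * h

lemma key (hc : ∀ k : ℕ, c + (k : ℂ) ≠ 0) :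
    (X * (d⁄dX ℂ (d⁄dX ℂ (MM a c * BB p)))
      + 2 * (X * (X * (d⁄dX ℂ (d⁄dX ℂ (MM a c * BB p)))))
      + X * (X * (X * (d⁄dX ℂ (d⁄dX ℂ (MM a c * BB p))))))
    + (C c * (d⁄dX ℂ (MM a c * BB p))
      + (2 * C c - 1 - 2 * C p) * (X * (d⁄dX ℂ (MM a c * BB p)))
      + (C c - 2 - 2 * C p) * (X * (X * (d⁄dX ℂ (MM a c * BB p))))
      - X * (X * (X * (d⁄dX ℂ (MM a c * BB p)))))
    + (-(C a + C p * C c) * (MM a c * BB p)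
      + (C p * C p + 2 * C p - C p * C c - 2 * C a) * (X * (MM a c * BB p))
      + (C p - C a) * (X * (X * (MM a c * BB p)))) = 0 := by
  have dmul : ∀ f g : ℂ⟦X⟧, d⁄dX ℂ (f * g) = f * d⁄dX ℂ g + g * d⁄dX ℂ f := fun f g => by
    simpa [smul_eq_mul] using Derivation.leibniz (d⁄dX ℂ) f g
  have e1 : d⁄dX ℂ (MM a c * BB p)
      = d⁄dX ℂ (MM a c) * BB p + MM a c * d⁄dX ℂ (BB p) := by
    rw [dmul]; ring
  have e2 : d⁄dX ℂ (d⁄dX ℂ (MM a c * BB p))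
      = d⁄dX ℂ (d⁄dX ℂ (MM a c)) * BB p + 2 * (d⁄dX ℂ (MM a c) * d⁄dX ℂ (BB p))
        + MM a c * d⁄dX ℂ (d⁄dX ℂ (BB p)) := by
    rw [e1, map_add, dmul, dmul]; ring
  rw [e2, e1]
  have h1 := hM a c hc
  have h2 := hB p
  have h3 := hB2 p
  linear_combination ((1+X)^2 * BB p) * h1
    + (2 * X * (1+X) * d⁄dX ℂ (MM a c) + (C c + (C c - C p - 2) * X - X^2) * MM a c) * h2
    + (X * (1+X) * MM a c) * h3


section
variable (a c p : ℂ)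

lemma rec_w (hc : ∀ k : ℕ, c + (k : ℂ) ≠ 0) (k : ℕ) :
    ((k:ℂ)+2+1) * (c + ((k:ℂ)+2)) * (coeff (k+3)) (MM a c * BB p)
      = (a - 2*((k:ℂ)+2)*(c+((k:ℂ)+2)-1) + p*(c+2*((k:ℂ)+2)) + ((k:ℂ)+2))
          * (coeff (k+2)) (MM a c * BB p)
      + (2*a - (((k:ℂ)+2)-p-1)*(c+((k:ℂ)+2)-p-2) + 2*((k:ℂ)+2) - p - 2)
          * (coeff (k+1)) (MM a c * BB p)
      + (a + ((k:ℂ)+2) - p - 2) * (coeff k) (MM a c * BB p) := by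
  have h := congrArg (coeff (k+2)) (key a c p hc)
  rcases k with _ | k
  · have s2 : ∀ g : ℂ⟦X⟧, coeff 2 (X*g) = coeff 1 g := fun g => coeff_succ_X_mul 1 g
    have s1 : ∀ g : ℂ⟦X⟧, coeff 1 (X*g) = coeff 0 g := fun g => coeff_succ_X_mul 0 g
    simp only [zero_add] at h ⊢
    simp only [map_add, map_sub, map_neg, neg_mul, sub_mul, add_mul, two_mul, one_mul,
      mul_assoc, coeff_C_mul, coeff_derivative, s2, s1, coeff_zero_X_mul, map_zero,
      Nat.cast_ofNat, Nat.cast_one, Nat.cast_zero] at h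
    push_cast at h ⊢
    linear_combination h
  · have s3 : ∀ g : ℂ⟦X⟧, coeff (k+3) (X*g) = coeff (k+2) g :=
      fun g => coeff_succ_X_mul (k+2) g
    have s2 : ∀ g : ℂ⟦X⟧, coeff (k+2) (X*g) = coeff (k+1) g :=
      fun g => coeff_succ_X_mul (k+1) g
    have s1 : ∀ g : ℂ⟦X⟧, coeff (k+1) (X*g) = coeff k g :=
      fun g => coeff_succ_X_mul k g
    simp only [show k+1+2 = k+3 from rfl] at h ⊢
    simp only [map_add, map_sub, map_neg, neg_mul, sub_mul, add_mul, two_mul, one_mul,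
      mul_assoc, coeff_C_mul, coeff_derivative, add_assoc, Nat.reduceAdd,
      s3, s2, s1, map_zero] at h
    push_cast at h ⊢
    linear_combination h

end

lemma poch_one (w : ℂ) : poch w 1 = w := by
  have := poch_succ w 0; simpa using this

theorem stmt_2 (a c p : ℂ) (hc : ∀ k : ℕ, c + (k : ℂ) ≠ 0)
    (u : ℕ → ℂ)
    (hu : ∀ n : ℕ, u n = ∑ k ∈ range (n + 1),
      poch a k / (poch c k * (Nat.factorial k : ℂ)) *
        ((-1 : ℂ) ^ (n - k) * poch (-p) (n - k) / (Nat.factorial (n - k) : ℂ))) :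
    u 0 = 1 ∧
    u 1 = a / c + p ∧
    u 2 = (1 / 2) * ((a ^ 2 + a) / (c ^ 2 + c) + 2 * a * p / c + p * (p - 1)) ∧
    ∀ n : ℕ, 2 ≤ n →
      u (n + 1) =
        (a - 2 * n * (c + n - 1) + p * (c + 2 * n) + n) / (((n : ℂ) + 1) * (c + n)) * u n
        + (2 * a - (n - p - 1) * (c + n - p - 2) + 2 * n - p - 2) /
            (((n : ℂ) + 1) * (c + n)) * u (n - 1)
        + (a + n - p - 2) / (((n : ℂ) + 1) * (c + n)) * u (n - 2) := by
  have hc0 : c ≠ 0 := by simpa using hc 0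
  have hc1 : c + 1 ≠ 0 := by simpa using hc 1
  have hw : ∀ n, u n = (coeff n) (MM a c * BB p) := by
    intro n
    rw [hu n, coeff_mul, Finset.Nat.sum_antidiagonal_eq_sum_range_succ_mk]
    refine Finset.sum_congr rfl fun i hi => ?_
    simp [MM, BB, mm, bb, coeff_mk, mul_div_assoc]
  refine ⟨?_, ?_, ?_, ?_⟩
  · rw [hu 0]; simp
  · rw [hu 1]
    simp [Finset.sum_range_succ, poch_one]
    ring
  · rw [hu 2]
    have hcc : c + c^2 ≠ 0 := by
      have e : c + c^2 = c*(c+1) := by ring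
      rw [e]; exact mul_ne_zero hc0 hc1
    simp [Finset.sum_range_succ, poch_one, poch_succ]
    have hcc2 : c^2 + c ≠ 0 := by rw [show c^2+c = c+c^2 from by ring]; exact hcc
    field_simp [hcc2]
    ring
  · intro n hn
    obtain ⟨k, rfl⟩ : ∃ k, n = k + 2 := ⟨n - 2, by omega⟩
    have hr := rec_w a c p hc k
    rw [show k+2+1 = k+3 from rfl, show k+2-1 = k+1 from rfl, show k+2-2 = k from rfl,
      hw, hw, hw, hw]
    push_cast
    have h1 : ((k:ℂ)+2+1) ≠ 0 := by norm_cast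
    have h2 : c + ((k:ℂ)+2) ≠ 0 := by have := hc (k+2); push_cast at this; exact this
    field_simp
    linear_combination hr
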